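/- In the complete-graph PIN model on m ≥ 2 vertices with n repetitions, suppose L = Lξ is a linear function of the edge bits satisfying I(X_M^n | L) ≤ ε/(m−1)·n for some ε ≥ 0 (with I defined using the fractional partition λ̃ putting weight 1/(m−1) on each (m−1)-subset). Then rank(L) ≥ n·m(m−1)/2 − nε, i.e., H(L) ≥ n(C(m,2) − ε). -/

import Mathlib

/-! Everything is linear over `𝔽₂` and the edge bits are uniform, so every entropy is the rank
of a linear map: `H(L) = rank L`, `H(X_M, L) = H(X_{M∖i}, X_i, L) = |E|`, and
`H(X_i, L) = |E_i| + dim L(ker X_i)`, where `ker X_i` consists of the bit vectors supported on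
edges not incident with `i`. Pick edges whose columns form a basis of the column space of `L`;
each of them avoids exactly `m - 2` vertices, so `∑ᵢ dim L(ker X_i) ≥ (m - 2) rank L`. Together
with `∑ᵢ |E_i| = 2|E|` this gives `I(X_M | L) ≥ nm/2 - rank L / (m - 1)`, and the hypothesis
turns into `rank L ≥ |E| - nε`. -/

open Finset Real

noncomputable def probOf {Ω : Type*} [Fintype Ω] (p : Ω → ℝ) {α : Type*} [DecidableEq α]
    (X : Ω → α) (a : α) : ℝ :=
  ∑ ω ∈ Finset.univ.filter (fun ω => X ω = a), p ω

/-- Shannon entropy (in bits). -/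
noncomputable def shannonH {Ω : Type*} [Fintype Ω] (p : Ω → ℝ) {α : Type*} [Fintype α]
    [DecidableEq α] (X : Ω → α) : ℝ :=
  - ∑ a : α, probOf p X a * Real.logb 2 (probOf p X a)

/-- Conditional Shannon entropy `H(X | Y) = H(X, Y) - H(Y)` (in bits). -/
noncomputable def condH {Ω : Type*} [Fintype Ω] (p : Ω → ℝ) {α β : Type*} [Fintype α]
    [DecidableEq α] [Fintype β] [DecidableEq β] (X : Ω → α) (Y : Ω → β) : ℝ :=
  shannonH p (fun ω => (X ω, Y ω)) - shannonH p Y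

/-- The edge multiset `E⁽ⁿ⁾` of the multigraph consisting of `n` copies of each
edge of the complete graph `K_m`. -/
def EdgeIdx (m n : ℕ) : Type := Fin n × {e : Sym2 (Fin m) // ¬ e.IsDiag}

instance (m n : ℕ) : Fintype (EdgeIdx m n) := instFintypeProd _ _
instance (m n : ℕ) : DecidableEq (EdgeIdx m n) := instDecidableEqProd

/-- The sample space of the PIN model: an i.i.d. uniform `F₂`-valued bit `ξ_e` for
each edge `e` of the multigraph. -/
def PinOmega (m n : ℕ) : Type := EdgeIdx m n → ZMod 2

instance (m n : ℕ) : Fintype (PinOmega m n) := Pi.instFintype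
instance (m n : ℕ) : DecidableEq (PinOmega m n) := Fintype.decidablePiFintype

/-- The uniform pmf on the PIN sample space. -/
noncomputable def pinUnif (m n : ℕ) : PinOmega m n → ℝ :=
  fun _ => (Fintype.card (PinOmega m n) : ℝ)⁻¹

/-- The observation `X_i^n` of terminal `i`: the bits on the edges incident with `i`. -/
def pinX (m n : ℕ) (i : Fin m) (ω : PinOmega m n) :
    {e : EdgeIdx m n // i ∈ (e.2.1 : Sym2 (Fin m))} → ZMod 2 :=
  fun e => ω e.1

/-- The full observation `X_M^n = (X_1^n, …, X_m^n)`. -/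
def pinXM (m n : ℕ) (ω : PinOmega m n) :
    (i : Fin m) → ({e : EdgeIdx m n // i ∈ (e.2.1 : Sym2 (Fin m))} → ZMod 2) :=
  fun i => pinX m n i ω

/-- The observations `X_{M∖{i}}^n` of all terminals other than `i`. -/
def pinXRest (m n : ℕ) (i : Fin m) (ω : PinOmega m n) :
    (j : {j : Fin m // j ≠ i}) →
      ({e : EdgeIdx m n // (j : Fin m) ∈ (e.2.1 : Sym2 (Fin m))} → ZMod 2) :=
  fun j => pinX m n j.1 ω

section Entropy

variable {Ω α : Type*} [Fintype Ω] [DecidableEq α]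

theorem shannonH_eq_logb_card_of_probOf_eq [Fintype α] (p : Ω → ℝ) (X : Ω → α) (S : Finset α)
    (hS : S.Nonempty) (hX : ∀ a, probOf p X a = if a ∈ S then (#S : ℝ)⁻¹ else 0) :
    shannonH p X = logb 2 #S := by
  have hS0 : (#S : ℝ) ≠ 0 := by exact_mod_cast hS.card_pos.ne'
  simp only [shannonH, hX, apply_ite (fun x : ℝ => x * logb 2 x), zero_mul,
    sum_ite_mem, univ_inter, sum_const, nsmul_eq_mul, logb_inv]
  field_simp

theorem probOf_uniform_of_injective {X : Ω → α} (hX : Function.Injective X) (a : α) :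
    probOf (fun _ => (Fintype.card Ω : ℝ)⁻¹) X a =
      if a ∈ univ.image X then (#(univ.image X) : ℝ)⁻¹ else 0 := by
  rw [card_image_of_injective _ hX, probOf, sum_const, nsmul_eq_mul]
  split_ifs with ha
  · obtain ⟨ω, -, rfl⟩ := mem_image.mp ha
    have : ({ω' | X ω' = X ω} : Finset Ω) = {ω} := by ext; simp [hX.eq_iff]
    simp [this]
  · have : ({ω | X ω = a} : Finset Ω) = ∅ := by
      ext ω; simpa using fun h => ha (mem_image.mpr ⟨ω, mem_univ _, h⟩)
    simp [this]

theorem shannonH_uniform_of_injective [Fintype α] [Nonempty Ω] {X : Ω → α}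
    (hX : Function.Injective X) :
    shannonH (fun _ => (Fintype.card Ω : ℝ)⁻¹) X = logb 2 (Fintype.card Ω) := by
  rw [shannonH_eq_logb_card_of_probOf_eq _ X _ (univ_nonempty.image X)
    (probOf_uniform_of_injective hX), card_image_of_injective _ hX, card_univ]

theorem probOf_uniform_addMonoidHom {G F : Type*} [AddGroup G] [Fintype G] [AddGroup α]
    [FunLike F G α] [AddMonoidHomClass F G α] (f : F) (a : α) :
    probOf (fun _ => (Fintype.card G : ℝ)⁻¹) f a =
      if a ∈ univ.image f then (#(univ.image f) : ℝ)⁻¹ else 0 := by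
  have hfiber : ∀ b ∈ univ.image f, #{g | f g = b} = #{g | f g = 0} := fun b hb =>
    AddMonoidHom.card_fiber_eq_of_mem_range f (by simpa using hb) ⟨0, map_zero f⟩
  have hcard : Fintype.card G = #(univ.image f) * #{g | f g = 0} := by
    rw [← card_univ, card_eq_sum_card_image f univ, sum_congr rfl hfiber, sum_const,
      smul_eq_mul]
  have hker : (#{g | f g = 0} : ℝ) ≠ 0 := by
    exact_mod_cast (card_pos.mpr ⟨0, by simp⟩).ne'
  rw [probOf, sum_const, nsmul_eq_mul]
  split_ifs with ha
  · rw [hfiber a ha, hcard, Nat.cast_mul]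
    field_simp
  · have : ({g | f g = a} : Finset G) = ∅ := by
      ext g; simpa using fun h => ha (mem_image.mpr ⟨g, mem_univ _, h⟩)
    simp [this]

theorem shannonH_uniform_linearMap {K V : Type*} [Field K] [Fintype K] [AddCommGroup V]
    [Module K V] [Fintype V] [Fintype α] [AddCommGroup α] [Module K α] (f : V →ₗ[K] α) :
    shannonH (fun _ => (Fintype.card V : ℝ)⁻¹) f =
      Module.finrank K (LinearMap.range f) * logb 2 (Fintype.card K) := by
  rw [shannonH_eq_logb_card_of_probOf_eq _ _ _ (univ_nonempty.image f)
    (probOf_uniform_addMonoidHom f)]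
  have : #(univ.image f) = Fintype.card (LinearMap.range f) := by
    rw [Fintype.card_of_subtype (univ.image f) (by simp [LinearMap.mem_range])]
  rw [this, Module.card_eq_pow_finrank (K := K), Nat.cast_pow, logb_pow]

end Entropy

universe u

section LinearAlgebra

open Module Submodule

variable {K V W₁ W₂ : Type*} [Field K] [AddCommGroup V] [Module K V] [FiniteDimensional K V]
  [AddCommGroup W₁] [Module K W₁] [AddCommGroup W₂] [Module K W₂]

theorem LinearMap.finrank_range_prod (g : V →ₗ[K] W₁) (f : V →ₗ[K] W₂) :
    finrank K (LinearMap.range (g.prod f)) =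
      finrank K (LinearMap.range g) + finrank K ((LinearMap.ker g).map f) := by
  have hT := (g.prod f).finrank_range_add_finrank_ker
  have hg := g.finrank_range_add_finrank_ker
  have hf := (f.domRestrict (LinearMap.ker g)).finrank_range_add_finrank_ker
  rw [LinearMap.range_domRestrict, LinearMap.ker_domRestrict,
    ← finrank_map_subtype_eq, map_comap_subtype] at hf
  rw [LinearMap.ker_prod] at hT
  omega

open scoped Classical in
theorem le_sum_finrank_map_of_linearIndependent {κ ι : Type*} [Fintype κ] [Fintype ι]
    (f : V →ₗ[K] W₂) (U : ι → Submodule K V) {v : κ → V} (hv : LinearIndependent K (f ∘ v))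
    {k : ℕ} (hk : ∀ b, k ≤ #{i | v b ∈ U i}) :
    k * Fintype.card κ ≤ ∑ i, finrank K ((U i).map f) := by
  have hU : ∀ i, #{b | v b ∈ U i} ≤ finrank K ((U i).map f) := by
    intro i
    let w : {b // v b ∈ U i} → (U i).map f := fun b => ⟨f (v b), Submodule.mem_map_of_mem b.2⟩
    have hw : LinearIndependent K w :=
      LinearIndependent.of_comp ((U i).map f).subtype (hv.comp _ Subtype.val_injective)
    simpa [Fintype.card_subtype] using hw.fintype_card_le_finrank
  calc k * Fintype.card κ = ∑ _b : κ, k := by simp [mul_comm]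
    _ ≤ ∑ b, #{i | v b ∈ U i} := sum_le_sum fun b _ => hk b
    _ = ∑ i, #{b | v b ∈ U i} := by
        simp only [card_filter]; exact sum_comm
    _ ≤ _ := sum_le_sum fun i _ => hU i

theorem LinearMap.exists_linearIndependent_single_images {ι : Type u} [Fintype ι] [DecidableEq ι]
    (f : (ι → K) →ₗ[K] W₂) :
    ∃ (κ : Type u) (_ : Fintype κ) (a : κ → ι),
      LinearIndependent K (f ∘ fun k => Pi.single (a k) 1) ∧
        Fintype.card κ = finrank K (LinearMap.range f) := by
  obtain ⟨κ, a, ha, hspan, hli⟩ := exists_linearIndependent' K fun e => f (Pi.single e 1)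
  have : Fintype κ := @Fintype.ofFinite _ (Finite.of_injective a ha)
  refine ⟨κ, this, a, hli, ?_⟩
  have hrange : span K (Set.range fun e => f (Pi.single e 1)) = LinearMap.range f := by
    rw [LinearMap.range_eq_map, ← (Pi.basisFun K ι).span_eq, map_span, ← Set.range_comp]
    simp [Function.comp_def]
  rw [← finrank_span_eq_card hli, hspan, hrange]

end LinearAlgebra

theorem Sym2.card_filter_mem_of_not_isDiag {α : Type*} [Fintype α] [DecidableEq α] {s : Sym2 α}
    (hs : ¬ s.IsDiag) : #{a | a ∈ s} = 2 := by
  rw [← Sym2.card_toFinset_of_not_isDiag s hs]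
  congr 1; ext; simp

section Pin

variable {m n : ℕ}

theorem card_edgeIdx : Fintype.card (EdgeIdx m n) = n * m.choose 2 :=
  (Fintype.card_prod _ _).trans <| by
    rw [Fintype.card_fin, Sym2.card_subtype_not_diag, Fintype.card_fin]

theorem sum_card_incident :
    ∑ i : Fin m, Fintype.card {e : EdgeIdx m n // i ∈ (e.2.1 : Sym2 (Fin m))} =
      2 * Fintype.card (EdgeIdx m n) := by
  classical
  simp only [Fintype.card_subtype, card_filter]
  rw [sum_comm]
  calc ∑ e : EdgeIdx m n, ∑ i : Fin m, (if i ∈ (e.2.1 : Sym2 (Fin m)) then 1 else 0)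
      = ∑ _e : EdgeIdx m n, 2 := sum_congr rfl fun e _ => by
        rw [← card_filter]; exact Sym2.card_filter_mem_of_not_isDiag e.2.2
    _ = 2 * Fintype.card (EdgeIdx m n) := by rw [sum_const, card_univ, smul_eq_mul, mul_comm]

variable (m n) in
def pinXLin (i : Fin m) : (EdgeIdx m n → ZMod 2) →ₗ[ZMod 2]
    ({e : EdgeIdx m n // i ∈ (e.2.1 : Sym2 (Fin m))} → ZMod 2) :=
  LinearMap.funLeft (ZMod 2) (ZMod 2) Subtype.val

theorem pinXM_injective : Function.Injective (pinXM m n) := fun _ _ h =>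
  funext fun e => congrFun (congrFun h (e.2.1 : Sym2 (Fin m)).out.1) ⟨e, Sym2.out_fst_mem _⟩

theorem eq_of_pinXRest_eq_of_pinX_eq {i : Fin m} {ω₁ ω₂ : PinOmega m n}
    (hrest : pinXRest m n i ω₁ = pinXRest m n i ω₂) (hi : pinX m n i ω₁ = pinX m n i ω₂) :
    ω₁ = ω₂ := by
  funext e
  by_cases hie : i ∈ (e.2.1 : Sym2 (Fin m))
  · exact congrFun hi ⟨e, hie⟩
  · have hj := Sym2.out_fst_mem (e.2.1 : Sym2 (Fin m))
    exact congrFun (congrFun hrest ⟨_, fun h => hie (h ▸ hj)⟩) ⟨e, hj⟩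

theorem condH_pinUnif_of_injective {α β : Type*} [Fintype α] [DecidableEq α] [Fintype β]
    [DecidableEq β] {X : PinOmega m n → α} {Y : PinOmega m n → β}
    (hXY : Function.Injective fun ω => (X ω, Y ω)) :
    condH (pinUnif m n) X Y = Fintype.card (EdgeIdx m n) - shannonH (pinUnif m n) Y := by
  have : Nonempty (PinOmega m n) := ⟨fun _ => 0⟩
  have hH : shannonH (pinUnif m n) (fun ω => (X ω, Y ω)) =
      logb 2 (Fintype.card (PinOmega m n)) := shannonH_uniform_of_injective hXY
  rw [condH, hH]
  simp [PinOmega, logb_pow]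

theorem shannonH_pinUnif_linearMap {α : Type*} [Fintype α] [DecidableEq α] [AddCommGroup α]
    [Module (ZMod 2) α] (f : (EdgeIdx m n → ZMod 2) →ₗ[ZMod 2] α) :
    shannonH (pinUnif m n) f = Module.finrank (ZMod 2) (LinearMap.range f) :=
  (shannonH_uniform_linearMap f).trans (by simp)

variable {q : ℕ} (L : Matrix (Fin q) (EdgeIdx m n) (ZMod 2))

theorem condH_pinXM :
    condH (pinUnif m n) (pinXM m n) (fun ω => L.mulVec ω) =
      Fintype.card (EdgeIdx m n) - L.rank := by
  rw [condH_pinUnif_of_injective (X := pinXM m n) (Y := fun ω => L.mulVec ω)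
    fun _ _ h => pinXM_injective (congrArg Prod.fst h)]
  exact congrArg _ (shannonH_pinUnif_linearMap L.mulVecLin)

theorem condH_pinXRest (i : Fin m) :
    condH (pinUnif m n) (pinXRest m n i) (fun ω => (pinX m n i ω, L.mulVec ω)) =
      Fintype.card (EdgeIdx m n) -
        Module.finrank (ZMod 2) (LinearMap.range ((pinXLin m n i).prod L.mulVecLin)) := by
  rw [condH_pinUnif_of_injective (X := pinXRest m n i)
    (Y := fun ω => (pinX m n i ω, L.mulVec ω)) fun _ _ h =>
      eq_of_pinXRest_eq_of_pinX_eq (congrArg Prod.fst h) (congrArg (·.2.1) h)]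
  exact congrArg _ (shannonH_pinUnif_linearMap ((pinXLin m n i).prod L.mulVecLin))

theorem finrank_range_pinXLin (i : Fin m) :
    Module.finrank (ZMod 2) (LinearMap.range (pinXLin m n i)) =
      Fintype.card {e : EdgeIdx m n // i ∈ (e.2.1 : Sym2 (Fin m))} := by
  have hsurj : Function.Surjective (pinXLin m n i) :=
    LinearMap.funLeft_surjective_of_injective _ _ _ Subtype.val_injective
  rw [LinearMap.range_eq_top.mpr hsurj, finrank_top, Module.finrank_fintype_fun_eq_card]

theorem single_mem_ker_pinXLin_iff (i : Fin m) (e : EdgeIdx m n) :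
    Pi.single e 1 ∈ LinearMap.ker (pinXLin m n i) ↔ i ∉ (e.2.1 : Sym2 (Fin m)) := by
  simp only [LinearMap.mem_ker, funext_iff, pinXLin, LinearMap.funLeft_apply, Pi.zero_apply,
    Subtype.forall]
  constructor
  · intro h hi
    simpa using h e hi
  · intro hi e' he'
    rw [Pi.single_apply, if_neg (by rintro rfl; exact hi he')]

theorem rank_mul_le_sum_finrank_map_ker_pinXLin :
    (m - 2) * L.rank ≤ ∑ i : Fin m,
      Module.finrank (ZMod 2) ((LinearMap.ker (pinXLin m n i)).map L.mulVecLin) := by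
  obtain ⟨κ, _, a, hli, hcard⟩ := L.mulVecLin.exists_linearIndependent_single_images
  rw [Matrix.rank, ← hcard]
  refine le_sum_finrank_map_of_linearIndependent _ _ (v := fun k => Pi.single (a k) 1) hli
    fun k => le_of_eq ?_
  simp only [single_mem_ker_pinXLin_iff, filter_not, card_sdiff_of_subset (filter_subset _ _),
    Sym2.card_filter_mem_of_not_isDiag (a k).2.2, card_univ, Fintype.card_fin]

theorem two_mul_card_add_rank_le_sum_finrank_range_pinXLin_prod :
    2 * Fintype.card (EdgeIdx m n) + (m - 2) * L.rank ≤ ∑ i : Fin m,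
      Module.finrank (ZMod 2) (LinearMap.range ((pinXLin m n i).prod L.mulVecLin)) := by
  simp only [LinearMap.finrank_range_prod, finrank_range_pinXLin, sum_add_distrib,
    sum_card_incident]
  exact Nat.add_le_add_left (rank_mul_le_sum_finrank_map_ker_pinXLin L) _

/-- The paper's `I(X_M^n | L)` for the fractional partition `λ̃` giving weight `1/(m-1)` to each
set `M ∖ {i}`, with `H(X_{M∖i} | X_i, L)` as the conditional entropy for the part `M ∖ {i}`. -/
noncomputable def pinMI : ℝ :=
  condH (pinUnif m n) (pinXM m n) (fun ω => L.mulVec ω) -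
    (1 / (m - 1)) * ∑ i : Fin m,
      condH (pinUnif m n) (pinXRest m n i) (fun ω => (pinX m n i ω, L.mulVec ω))

theorem le_pinMI (hm : 2 ≤ m) : n * m / 2 - L.rank / (m - 1) ≤ pinMI L := by
  have hm1 : (0 : ℝ) < m - 1 := by
    have : (2 : ℝ) ≤ m := by exact_mod_cast hm
    linarith
  have hE : (Fintype.card (EdgeIdx m n) : ℝ) = n * (m * (m - 1) / 2) := by
    rw [card_edgeIdx, Nat.cast_mul, Nat.cast_choose_two]
  have hsum : 2 * (Fintype.card (EdgeIdx m n) : ℝ) + (m - 2) * L.rank ≤ ∑ i : Fin m,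
      (Module.finrank (ZMod 2) (LinearMap.range ((pinXLin m n i).prod L.mulVecLin)) : ℝ) := by
    exact_mod_cast two_mul_card_add_rank_le_sum_finrank_range_pinXLin_prod L
  simp only [pinMI, condH_pinXM, condH_pinXRest, sum_sub_distrib, sum_const, card_univ,
    Fintype.card_fin, nsmul_eq_mul]
  generalize (∑ i : Fin m, _ : ℝ) = D at hsum ⊢
  rw [hE] at hsum ⊢
  field_simp
  linarith

end Pin

theorem stmt_18_general (m n q : ℕ) (hm : 2 ≤ m)
    (L : Matrix (Fin q) (EdgeIdx m n) (ZMod 2)) (ε : ℝ)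
    (hI : condH (pinUnif m n) (pinXM m n) (fun ω => L.mulVec ω) -
        (1 / (m - 1)) * ∑ i : Fin m,
          condH (pinUnif m n) (pinXRest m n i)
            (fun ω => (pinX m n i ω, L.mulVec ω))
      ≤ ε / (m - 1) * n) :
    (L.rank : ℝ) ≥ n * m * (m - 1) / 2 - n * ε ∧
    shannonH (pinUnif m n) (fun ω => L.mulVec ω) ≥ n * (m * (m - 1) / 2 - ε) := by
  have hm1 : (0 : ℝ) < m - 1 := by
    have : (2 : ℝ) ≤ m := by exact_mod_cast hm
    linarith
  have hbound : n * m / 2 - L.rank / (m - 1) ≤ ε / (m - 1) * n := (le_pinMI L hm).trans hI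
  have hrank : (n * m * (m - 1) / 2 - n * ε : ℝ) ≤ L.rank := by
    field_simp at hbound
    linarith
  have hH : shannonH (pinUnif m n) (fun ω => L.mulVec ω) = L.rank :=
    shannonH_pinUnif_linearMap L.mulVecLin
  refine ⟨hrank, ?_⟩
  rw [hH]
  linarith

theorem stmt_18 (m n q : ℕ) (hm : 2 ≤ m)
    (L : Matrix (Fin q) (EdgeIdx m n) (ZMod 2)) (ε : ℝ) (hε : 0 ≤ ε)
    (hI : condH (pinUnif m n) (pinXM m n) (fun ω => L.mulVec ω) -
        (1 / (m - 1)) * ∑ i : Fin m,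
          condH (pinUnif m n) (pinXRest m n i)
            (fun ω => (pinX m n i ω, L.mulVec ω))
      ≤ ε / (m - 1) * n) :
    (L.rank : ℝ) ≥ n * m * (m - 1) / 2 - n * ε ∧
    shannonH (pinUnif m n) (fun ω => L.mulVec ω) ≥ n * (m * (m - 1) / 2 - ε) :=
  stmt_18_general m n q hm L ε hI
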